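/- Define the relation ≤' on [0,1] ∪ {u} (u ∉ [0,1]) by: x ≤' y iff x = u, or x = y, or y < x ≤ 1/2, or 1/2 ≤ x < y (with <, ≤ the usual real order on [0,1]). Then ≤' is a partial order on [0,1] ∪ {u} with least element u; every nonempty subset X of [0,1] ∪ {u} has a greatest lower bound with respect to ≤', given by: u if u ∈ X; inf X if X ⊆ [1/2, 1]; sup X if X ⊆ [0, 1/2]; and 1/2 otherwise; and every chain in ([0,1] ∪ {u}, ≤') has a least upper bound. Hence ([0,1] ∪ {u}, ≤') is a complete partial order. -/

import Mathlib

/-- The unit interval `[0,1]`; the carrier of the refined ordering is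
`[0,1] ∪ {u}`, modeled as `Option ↥I01` with `none` playing the role of `u`. -/
abbrev I01 : Set ℝ := Set.Icc (0:ℝ) 1

/-- The refined information ordering `≤'` on `[0,1] ∪ {u}`:
`x ≤' y` iff `x = u`, or `x = y`, or `y < x ≤ 1/2`, or `1/2 ≤ x < y`
(with `<`, `≤` the usual real order). -/
def le' (a b : Option ↥I01) : Prop :=
  a = none ∨ ∃ x y : ↥I01, a = some x ∧ b = some y ∧
    (x = y ∨ ((y:ℝ) < x ∧ (x:ℝ) ≤ 1/2) ∨ (1/2 ≤ (x:ℝ) ∧ (x:ℝ) < y))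

/-- The set of real values occurring in a subset of `[0,1] ∪ {u}`. -/
def vals (X : Set (Option ↥I01)) : Set ℝ :=
  {y : ℝ | ∃ z : ↥I01, (z:ℝ) = y ∧ some z ∈ X}

/-- greatest lower bound with respect to `≤'` -/
def IsGLB' (X : Set (Option ↥I01)) (g : Option ↥I01) : Prop :=
  (∀ x ∈ X, le' g x) ∧ ∀ b : Option ↥I01, (∀ x ∈ X, le' b x) → le' b g

/-- least upper bound with respect to `≤'` -/
def IsLUB' (X : Set (Option ↥I01)) (g : Option ↥I01) : Prop :=
  (∀ x ∈ X, le' x g) ∧ ∀ b : Option ↥I01, (∀ x ∈ X, le' x b) → le' g b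

/-!
For real values the refined order reads `x ≤' y ↔ x ∈ [[1/2, y]]`: it is the order of a tree with
root `1/2` and two branches, `[0, 1/2]` ordered by `≥` and `[1/2, 1]` ordered by `≤`.
The lower bounds of a set `S` of values form `⋂ v ∈ S, [[1/2, v]]`, which is the segment from
`1/2` to `inf S` or to `sup S` when `S` lies on one branch, and `{1/2}` when it meets both.
A chain cannot meet both branches strictly, and on one branch the least upper bound is the
ordinary supremum or infimum.
-/

open Set Interval

lemma eq_or_lt_and_le_or_le_and_lt_iff_mem_uIcc {α : Type*} [LinearOrder α] {c x y : α} :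
    x = y ∨ (y < x ∧ x ≤ c) ∨ (c ≤ x ∧ x < y) ↔ x ∈ [[c, y]] := by
  rw [mem_uIcc]
  grind

section SegmentOrder

variable {α : Type*} [ConditionallyCompleteLinearOrder α] {c lo hi : α} {S : Set α}

lemma csInf_mem_Icc_of_subset (hne : S.Nonempty) (hS : S ⊆ Icc lo hi) : sInf S ∈ Icc lo hi := by
  obtain ⟨v, hv⟩ := hne
  exact ⟨le_csInf ⟨v, hv⟩ fun _ hw => (hS hw).1,
    (csInf_le (bddBelow_Icc.mono hS) hv).trans (hS hv).2⟩

lemma csSup_mem_Icc_of_subset (hne : S.Nonempty) (hS : S ⊆ Icc lo hi) : sSup S ∈ Icc lo hi :=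
  (csInf_mem_Icc_of_subset (α := αᵒᵈ) hne fun _ hv => ⟨(hS hv).2, (hS hv).1⟩).symm

lemma biInter_uIcc_eq_uIcc_csInf (hS : S ⊆ Ici c) (hne : S.Nonempty) (hbdd : BddBelow S) :
    ⋂ v ∈ S, [[c, v]] = [[c, sInf S]] := by
  ext w
  rw [mem_iInter₂]
  refine ⟨fun hw => ?_, fun hw v hv =>
    uIcc_subset_uIcc_left (mem_uIcc_of_le (le_csInf hne hS) (csInf_le hbdd hv)) hw⟩
  have hw' : ∀ v ∈ S, w ∈ Icc c v := fun v hv => uIcc_of_le (hS hv) ▸ hw v hv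
  obtain ⟨v, hv⟩ := hne
  exact mem_uIcc_of_le (hw' v hv).1 (le_csInf ⟨v, hv⟩ fun u hu => (hw' u hu).2)

lemma biInter_uIcc_eq_uIcc_csSup (hS : S ⊆ Iic c) (hne : S.Nonempty) (hbdd : BddAbove S) :
    ⋂ v ∈ S, [[c, v]] = [[c, sSup S]] := by
  ext w
  rw [mem_iInter₂]
  refine ⟨fun hw => ?_, fun hw v hv =>
    uIcc_subset_uIcc_left (mem_uIcc_of_ge (le_csSup hbdd hv) (csSup_le hne hS)) hw⟩
  have hw' : ∀ v ∈ S, w ∈ Icc v c := fun v hv => uIcc_of_ge (hS hv) ▸ hw v hv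
  obtain ⟨v, hv⟩ := hne
  exact mem_uIcc_of_ge (csSup_le ⟨v, hv⟩ fun u hu => (hw' u hu).1) (hw' v hv).2

lemma biInter_uIcc_eq_singleton {v₁ v₂ : α} (hv₁ : v₁ ∈ S) (h₁ : v₁ < c) (hv₂ : v₂ ∈ S)
    (h₂ : c < v₂) : ⋂ v ∈ S, [[c, v]] = {c} := by
  ext w
  rw [mem_iInter₂, mem_singleton_iff]
  refine ⟨fun hw => ?_, fun hw v _ => hw ▸ left_mem_uIcc⟩
  have hw₁ := hw v₁ hv₁
  have hw₂ := hw v₂ hv₂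
  rw [uIcc_of_ge h₁.le] at hw₁
  rw [uIcc_of_le h₂.le] at hw₂
  exact le_antisymm hw₁.2 hw₂.1

lemma exists_biInter_uIcc_eq (hne : S.Nonempty) (hS : S ⊆ Icc lo hi) :
    ∃ g ∈ Icc lo hi, ⋂ v ∈ S, [[c, v]] = [[c, g]] ∧ (S ⊆ Ici c → g = sInf S) ∧
      (S ⊆ Iic c → g = sSup S) ∧ (¬ S ⊆ Ici c → ¬ S ⊆ Iic c → g = c) := by
  by_cases hge : S ⊆ Ici c
  · refine ⟨sInf S, csInf_mem_Icc_of_subset hne hS,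
      biInter_uIcc_eq_uIcc_csInf hge hne (bddBelow_Icc.mono hS), fun _ => rfl, fun hle => ?_,
      fun h => absurd hge h⟩
    have hc : S = {c} := hne.subset_singleton_iff.1 fun v hv => le_antisymm (hle hv) (hge hv)
    rw [hc, csInf_singleton, csSup_singleton]
  by_cases hle : S ⊆ Iic c
  · exact ⟨sSup S, csSup_mem_Icc_of_subset hne hS,
      biInter_uIcc_eq_uIcc_csSup hle hne (bddAbove_Icc.mono hS), fun h => absurd h hge,
      fun _ => rfl, fun _ h => absurd hle h⟩
  obtain ⟨v₁, hv₁, h₁⟩ := not_subset.1 hge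
  obtain ⟨v₂, hv₂, h₂⟩ := not_subset.1 hle
  rw [mem_Ici, not_le] at h₁
  rw [mem_Iic, not_le] at h₂
  exact ⟨c, ⟨(hS hv₁).1.trans h₁.le, h₂.le.trans (hS hv₂).2⟩,
    by rw [uIcc_self, biInter_uIcc_eq_singleton hv₁ h₁ hv₂ h₂], fun h => absurd h hge,
    fun h => absurd h hle, fun _ _ => rfl⟩

lemma subset_uIcc_iff_csSup_mem_uIcc (hS : S ⊆ Ici c) (hne : S.Nonempty) (hbdd : BddAbove S)
    {b : α} : S ⊆ [[c, b]] ↔ sSup S ∈ [[c, b]] :=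
  ⟨csSup_mem_Icc_of_subset hne, fun h _ hv =>
    uIcc_subset_uIcc_left h (mem_uIcc_of_le (hS hv) (le_csSup hbdd hv))⟩

lemma subset_uIcc_iff_csInf_mem_uIcc (hS : S ⊆ Iic c) (hne : S.Nonempty) (hbdd : BddBelow S)
    {b : α} : S ⊆ [[c, b]] ↔ sInf S ∈ [[c, b]] :=
  ⟨csInf_mem_Icc_of_subset hne, fun h _ hv =>
    uIcc_subset_uIcc_left h (mem_uIcc_of_ge (csInf_le hbdd hv) (hS hv))⟩

lemma subset_Ici_or_subset_Iic_of_isChain (hch : IsChain (fun a b => a ∈ [[c, b]]) S) :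
    S ⊆ Ici c ∨ S ⊆ Iic c := by
  refine or_iff_not_imp_left.2 fun hge v hv => not_lt.1 fun hv' => ?_
  obtain ⟨u, hu, hu'⟩ := not_subset.1 hge
  rw [mem_Ici, not_le] at hu'
  rcases hch hu hv (hu'.trans hv').ne with h | h
  · exact hu'.not_ge (uIcc_of_le hv'.le ▸ h).1
  · exact hv'.not_ge (uIcc_of_ge hu'.le ▸ h).2

lemma exists_subset_uIcc_iff_of_isChain (hch : IsChain (fun a b => a ∈ [[c, b]]) S)
    (hne : S.Nonempty) (hS : S ⊆ Icc lo hi) :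
    ∃ g ∈ Icc lo hi, ∀ b, S ⊆ [[c, b]] ↔ g ∈ [[c, b]] := by
  rcases subset_Ici_or_subset_Iic_of_isChain hch with h | h
  · exact ⟨sSup S, csSup_mem_Icc_of_subset hne hS, fun _ =>
      subset_uIcc_iff_csSup_mem_uIcc h hne (bddAbove_Icc.mono hS)⟩
  · exact ⟨sInf S, csInf_mem_Icc_of_subset hne hS, fun _ =>
      subset_uIcc_iff_csInf_mem_uIcc h hne (bddBelow_Icc.mono hS)⟩

end SegmentOrder

lemma le'_some_some_iff {x y : ↥I01} : le' (some x) (some y) ↔ (x : ℝ) ∈ [[1/2, (y : ℝ)]] := by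
  rw [← eq_or_lt_and_le_or_le_and_lt_iff_mem_uIcc, ← Subtype.ext_iff]
  simp only [le', reduceCtorEq, Option.some_inj, false_or, exists_and_left, exists_eq_left']

lemma not_le'_some_none {x : ↥I01} : ¬ le' (some x) none := by
  simp [le']

lemma le'_refl : ∀ a : Option ↥I01, le' a a
  | none => Or.inl rfl
  | some _ => le'_some_some_iff.2 right_mem_uIcc

lemma le'_antisymm : ∀ {a b : Option ↥I01}, le' a b → le' b a → a = b
  | none, none, _, _ => rfl
  | none, some _, _, h | some _, none, h, _ => absurd h not_le'_some_none
  | some _, some _, h₁, h₂ => congrArg some <| Subtype.ext <|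
      eq_of_mem_uIcc_of_mem_uIcc' (le'_some_some_iff.1 h₁) (le'_some_some_iff.1 h₂)

lemma le'_trans : ∀ {a b c : Option ↥I01}, le' a b → le' b c → le' a c
  | none, _, _, _, _ => Or.inl rfl
  | some _, none, _, h, _ | some _, some _, none, _, h => absurd h not_le'_some_none
  | some _, some _, some _, h₁, h₂ => le'_some_some_iff.2 <|
      uIcc_subset_uIcc_left (le'_some_some_iff.1 h₂) (le'_some_some_iff.1 h₁)

section RefinedOrder

variable {X : Set (Option ↥I01)}

lemma vals_subset_Icc : vals X ⊆ Icc 0 1 := by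
  rintro _ ⟨z, rfl, -⟩
  exact z.2

lemma vals_nonempty (hX : X.Nonempty) (hn : none ∉ X) : (vals X).Nonempty := by
  obtain ⟨_ | z, hz⟩ := hX
  · exact absurd hz hn
  · exact ⟨z, z, rfl, hz⟩

lemma forall_le'_some_left_iff (hn : none ∉ X) {w : ↥I01} :
    (∀ x ∈ X, le' (some w) x) ↔ (w : ℝ) ∈ ⋂ v ∈ vals X, [[1/2, v]] := by
  rw [mem_iInter₂]
  constructor
  · rintro h _ ⟨y, rfl, hy⟩
    exact le'_some_some_iff.1 (h _ hy)
  · rintro h (_ | y) hy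
    · exact absurd hy hn
    · exact le'_some_some_iff.2 (h _ ⟨y, rfl, hy⟩)

lemma forall_le'_some_right_iff {w : ↥I01} :
    (∀ x ∈ X, le' x (some w)) ↔ vals X ⊆ [[1/2, (w : ℝ)]] := by
  constructor
  · rintro h _ ⟨y, rfl, hy⟩
    exact le'_some_some_iff.1 (h _ hy)
  · rintro h (_ | y) hy
    · exact Or.inl rfl
    · exact le'_some_some_iff.2 (h ⟨y, rfl, hy⟩)

lemma isGLB'_none (hn : none ∈ X) : IsGLB' X none :=
  ⟨fun _ _ => Or.inl rfl, fun _ hb => hb none hn⟩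

lemma isGLB'_some (hn : none ∉ X) {z : ↥I01} (h : ⋂ v ∈ vals X, [[1/2, v]] = [[1/2, (z : ℝ)]]) :
    IsGLB' X (some z) := by
  refine ⟨(forall_le'_some_left_iff hn).2 (h ▸ right_mem_uIcc), ?_⟩
  rintro (_ | w) hw
  · exact Or.inl rfl
  · exact le'_some_some_iff.2 (h ▸ (forall_le'_some_left_iff hn).1 hw)

lemma isLUB'_none (hv : ¬ (vals X).Nonempty) : IsLUB' X none := by
  refine ⟨?_, fun _ _ => Or.inl rfl⟩
  rintro (_ | y) hy
  · exact Or.inl rfl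
  · exact absurd ⟨y, y, rfl, hy⟩ hv

lemma isLUB'_some (hv : (vals X).Nonempty) {z : ↥I01}
    (h : ∀ b : ℝ, vals X ⊆ [[1/2, b]] ↔ (z : ℝ) ∈ [[1/2, b]]) : IsLUB' X (some z) := by
  refine ⟨forall_le'_some_right_iff.2 ((h z).2 right_mem_uIcc), ?_⟩
  rintro (_ | w) hw
  · obtain ⟨_, y, rfl, hy⟩ := hv
    exact absurd (hw _ hy) not_le'_some_none
  · exact le'_some_some_iff.2 ((h w).1 (forall_le'_some_right_iff.1 hw))

lemma IsChain.vals (h : IsChain le' X) : IsChain (fun a b : ℝ => a ∈ [[1/2, b]]) (vals X) := by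
  rintro _ ⟨x, rfl, hx⟩ _ ⟨y, rfl, hy⟩ hxy
  have : some x ≠ some y := fun e => hxy (by rw [Option.some_inj.1 e])
  exact (h hx hy this).imp le'_some_some_iff.1 le'_some_some_iff.1

end RefinedOrder

/-- `≤'` is a partial order on `[0,1] ∪ {u}` with least element
`u`; every nonempty subset `X` has a greatest lower bound, given by `u` if
`u ∈ X`, by `inf X` if `X ⊆ [1/2, 1]`, by `sup X` if `X ⊆ [0, 1/2]`, and by
`1/2` otherwise; and every chain has a least upper bound. Hence
`([0,1] ∪ {u}, ≤')` is a complete partial order. -/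
theorem refined_ordering_is_cpo :
    (∀ a : Option ↥I01, le' a a) ∧
    (∀ a b : Option ↥I01, le' a b → le' b a → a = b) ∧
    (∀ a b c : Option ↥I01, le' a b → le' b c → le' a c) ∧
    (∀ a : Option ↥I01, le' none a) ∧
    (∀ X : Set (Option ↥I01), X.Nonempty →
      ∃ g : Option ↥I01, IsGLB' X g ∧
        (none ∈ X → g = none) ∧
        (none ∉ X → (∀ y ∈ vals X, 1/2 ≤ y) →
          ∃ z : ↥I01, g = some z ∧ (z:ℝ) = sInf (vals X)) ∧
        (none ∉ X → (∀ y ∈ vals X, y ≤ 1/2) →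
          ∃ z : ↥I01, g = some z ∧ (z:ℝ) = sSup (vals X)) ∧
        (none ∉ X → ¬ (∀ y ∈ vals X, 1/2 ≤ y) → ¬ (∀ y ∈ vals X, y ≤ 1/2) →
          ∃ z : ↥I01, g = some z ∧ (z:ℝ) = 1/2)) ∧
    (∀ X : Set (Option ↥I01), IsChain le' X →
      ∃ g : Option ↥I01, IsLUB' X g) := by
  refine ⟨le'_refl, fun _ _ => le'_antisymm, fun _ _ _ => le'_trans, fun _ => Or.inl rfl, ?_, ?_⟩
  · intro X hX
    by_cases hn : none ∈ X
    · exact ⟨none, isGLB'_none hn, fun _ => rfl, absurd hn, absurd hn, absurd hn⟩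
    obtain ⟨g, hg, hlower, hinf, hsup, hhalf⟩ :=
      exists_biInter_uIcc_eq (c := 1/2) (vals_nonempty hX hn) vals_subset_Icc
    exact ⟨some ⟨g, hg⟩, isGLB'_some hn hlower, (absurd · hn), fun _ h => ⟨_, rfl, hinf h⟩,
      fun _ h => ⟨_, rfl, hsup h⟩, fun _ h₁ h₂ => ⟨_, rfl, hhalf h₁ h₂⟩⟩
  · intro X hX
    by_cases hv : (vals X).Nonempty
    · obtain ⟨g, hg, hupper⟩ := exists_subset_uIcc_iff_of_isChain hX.vals hv vals_subset_Icc
      exact ⟨some ⟨g, hg⟩, isLUB'_some hv hupper⟩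
    · exact ⟨none, isLUB'_none hv⟩
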